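/- arXiv:1906.11363 — 2 statements merged into one kernel-verified Lean document; each statement's English description precedes it below -/
import Mathlib

section
/- Let K ⊆ ℝⁿ be a polyhedral convex cone and Λ ∈ ℝ^{n×n}. Then the set-valued mapping z ↦ Λz + N_K(z) is strongly regular at 0 for 0 if and only if for every r ∈ ℝⁿ the linear variational inequality Λz + N_K(z) ∋ r has exactly one solution. -/
open Matrix Filter Topology

noncomputable section

/-- Normal cone to a set `C ⊆ ℝⁿ` at `x` (empty when `x ∉ C`). -/
def normalCone {n : ℕ} (C : Set (Fin n → ℝ)) (x : Fin n → ℝ) : Set (Fin n → ℝ) :=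
  {y | x ∈ C ∧ ∀ w ∈ C, y ⬝ᵥ (w - x) ≤ 0}

/-- `C` is a polyhedral set: finitely many linear inequalities. -/
def IsPolyhedral {n : ℕ} (C : Set (Fin n → ℝ)) : Prop :=
  ∃ (l : ℕ) (Γ : Matrix (Fin l) (Fin n) ℝ) (b : Fin l → ℝ),
    C = {x | ∀ i, (Γ *ᵥ x) i ≤ b i}

/-- A set-valued mapping `F : ℝⁿ ⇉ ℝⁿ` is strongly regular at `xbar` for `ybar`:
`ybar ∈ F(xbar)` and the inverse has a single-valued Lipschitz localization. -/
def StronglyRegularAt {n : ℕ} (F : (Fin n → ℝ) → Set (Fin n → ℝ))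
    (xbar ybar : Fin n → ℝ) : Prop :=
  ybar ∈ F xbar ∧ ∃ U ∈ 𝓝 xbar, ∃ V ∈ 𝓝 ybar, ∃ s : (Fin n → ℝ) → (Fin n → ℝ),
    (∃ L : NNReal, LipschitzOnWith L s V) ∧ ∀ y ∈ V, {x | y ∈ F x} ∩ U = {s y}

section Aux

open Set

/-- 1-D gluing: if `[0,1]` is covered by finitely many closed sets on each of which
`f` is `L`-Lipschitz, then `‖f 1 - f 0‖ ≤ L`. -/
theorem segment_glue' {E : Type*} [NormedAddCommGroup E] (f : ℝ → E)
    {ι : Type*} [Finite ι] (T : ι → Set ℝ)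
    (hcov : Icc (0:ℝ) 1 ⊆ ⋃ j, T j) (hcl : ∀ j, IsClosed (T j))
    {L : ℝ} (hL : 0 ≤ L)
    (hlip : ∀ j, ∀ a ∈ T j, ∀ b ∈ T j, ‖f a - f b‖ ≤ L * |a - b|) :
    ‖f 1 - f 0‖ ≤ L := by
  set A : Set ℝ := {t | t ∈ Icc (0:ℝ) 1 ∧ ‖f t - f 0‖ ≤ L * t} with hA
  have h0A : (0:ℝ) ∈ A := by
    constructor
    · exact ⟨le_refl 0, zero_le_one⟩
    · simp
  have hAne : A.Nonempty := ⟨0, h0A⟩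
  have hAbdd : BddAbove A := ⟨1, fun t ht => ht.1.2⟩
  set m := sSup A with hm
  have hm0 : 0 ≤ m := le_csSup hAbdd h0A
  have hm1 : m ≤ 1 := csSup_le hAne (fun t ht => ht.1.2)
  have hclub : ∀ (B : Set ℝ), B ⊆ ⋃ j, T j → ∀ x ∈ closure B,
      ∃ j, x ∈ closure (B ∩ T j) := by
    intro B hB x hx
    have : closure B ⊆ ⋃ j, closure (B ∩ T j) := by
      apply closure_minimal
      · intro y hy
        obtain ⟨j, hj⟩ := mem_iUnion.mp (hB hy)
        exact mem_iUnion.mpr ⟨j, subset_closure ⟨hy, hj⟩⟩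
      · exact isClosed_iUnion_of_finite (fun j => isClosed_closure)
    exact mem_iUnion.mp (this hx)
  have hmA : m ∈ A := by
    have hmcl : m ∈ closure A := csSup_mem_closure hAne hAbdd
    have hsub : A ⊆ ⋃ j, T j := fun t ht => hcov ht.1
    obtain ⟨j, hj⟩ := hclub A hsub m hmcl
    have hmT : m ∈ T j := (hcl j).closure_subset (closure_mono inter_subset_right hj)
    refine ⟨⟨hm0, hm1⟩, ?_⟩
    have key : ∀ ε : ℝ, 0 < ε → ‖f m - f 0‖ ≤ L * m + ε := by
      intro ε hε
      obtain ⟨a, ha, hdist⟩ := Metric.mem_closure_iff.mp hj (ε / (L + 1)) (by positivity)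
      have haA : a ∈ A := ha.1
      have haT : a ∈ T j := ha.2
      have h1 : ‖f m - f a‖ ≤ L * |m - a| := hlip j m hmT a haT
      calc ‖f m - f 0‖ ≤ ‖f m - f a‖ + ‖f a - f 0‖ := norm_sub_le_norm_sub_add_norm_sub _ _ _
        _ ≤ L * |m - a| + L * a := add_le_add h1 haA.2
        _ ≤ L * (ε / (L + 1)) + L * m := by
            have : |m - a| ≤ ε / (L+1) := by
              rw [Real.dist_eq] at hdist; exact le_of_lt hdist
            have haM : a ≤ m := le_csSup hAbdd haA
            exact add_le_add (by nlinarith) (by nlinarith)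
        _ ≤ ε + L * m := by
            have : L * (ε / (L + 1)) ≤ ε := by
              rw [mul_div_assoc']
              rw [div_le_iff₀ (by linarith : (0:ℝ) < L+1)]
              nlinarith
            linarith
        _ = L * m + ε := by ring
    exact le_of_forall_pos_le_add key
  have hm_eq : m = 1 := by
    by_contra hne
    have hmlt : m < 1 := lt_of_le_of_ne hm1 hne
    have hsub2 : Ioc m 1 ⊆ ⋃ j, T j := fun t ht => hcov ⟨le_trans hm0 (le_of_lt ht.1), ht.2⟩
    have hmcl2 : m ∈ closure (Ioc m 1) := by
      rw [closure_Ioc (ne_of_lt hmlt)]; exact ⟨le_refl m, hm1⟩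
    obtain ⟨j, hj⟩ := hclub (Ioc m 1) hsub2 m hmcl2
    have hmT : m ∈ T j := (hcl j).closure_subset (closure_mono inter_subset_right hj)
    obtain ⟨t, ht⟩ : (Ioc m 1 ∩ T j).Nonempty := by
      by_contra h
      rw [not_nonempty_iff_eq_empty] at h
      rw [h, closure_empty] at hj
      exact hj
    have htA : t ∈ A := by
      refine ⟨⟨le_trans hm0 (le_of_lt ht.1.1), ht.1.2⟩, ?_⟩
      have h1 : ‖f t - f m‖ ≤ L * |t - m| := hlip j t ht.2 m hmT
      have h2 : |t - m| = t - m := abs_of_pos (by linarith [ht.1.1])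
      calc ‖f t - f 0‖ ≤ ‖f t - f m‖ + ‖f m - f 0‖ := norm_sub_le_norm_sub_add_norm_sub _ _ _
        _ ≤ L * (t - m) + L * m := by rw [h2] at h1; exact add_le_add h1 hmA.2
        _ = L * t := by ring
    have := le_csSup hAbdd htA
    linarith [ht.1.1]
  have := hmA.2
  rw [hm_eq] at this
  simpa using this

/-- Global Lipschitz bound from a finite cover by pieces on which `s` is Lipschitz. -/
theorem global_lip' {E F : Type*} [NormedAddCommGroup E] [NormedSpace ℝ E]
    [NormedAddCommGroup F] (s : E → F)
    {ι : Type*} [Finite ι] (D : ι → Set E)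
    (hcov : ∀ x : E, ∃ j, x ∈ D j)
    (hclT : ∀ (j : ι) (x v : E), IsClosed {t : ℝ | x + t • v ∈ D j})
    {L : ℝ} (hL : 0 ≤ L)
    (hlip : ∀ j, ∀ p ∈ D j, ∀ q ∈ D j, ‖s p - s q‖ ≤ L * ‖p - q‖) :
    ∀ x y : E, ‖s x - s y‖ ≤ L * ‖x - y‖ := by
  intro x y
  set v := x - y with hv
  set f : ℝ → F := fun t => s (y + t • v) with hf
  have h1 : f 1 = s x := by simp [hf, hv]
  have h0 : f 0 = s y := by simp [hf]
  set T : ι → Set ℝ := fun j => {t : ℝ | y + t • v ∈ D j} with hT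
  have key : ‖f 1 - f 0‖ ≤ L * ‖v‖ := by
    apply segment_glue' f T
    · intro t _
      obtain ⟨j, hj⟩ := hcov (y + t • v)
      exact mem_iUnion.mpr ⟨j, hj⟩
    · intro j; exact hclT j y v
    · positivity
    · intro j a ha b hb
      have := hlip j _ ha _ hb
      calc ‖f a - f b‖ ≤ L * ‖(y + a • v) - (y + b • v)‖ := this
        _ = L * ‖v‖ * |a - b| := by
            rw [show (y + a • v) - (y + b • v) = (a - b) • v by module]
            rw [norm_smul, Real.norm_eq_abs]; ring
  rw [h1, h0] at key; exact key

set_option synthInstance.maxHeartbeats 400000 in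
set_option maxHeartbeats 1000000 in
/-- On a set closed under addition and nonnegative scaling on which `s` is additive and
positively homogeneous, `s` admits a Lipschitz-type bound. -/
theorem cone_piece_lip' {E F : Type*} [NormedAddCommGroup E] [NormedSpace ℝ E]
    [FiniteDimensional ℝ E] [NormedAddCommGroup F] [NormedSpace ℝ F]
    (s : E → F) (D : Set E)
    (hadd : ∀ x ∈ D, ∀ y ∈ D, x + y ∈ D ∧ s (x + y) = s x + s y)
    (hsmul : ∀ c : ℝ, 0 ≤ c → ∀ x ∈ D, c • x ∈ D ∧ s (c • x) = c • s x) :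
    ∃ L : ℝ, 0 ≤ L ∧ ∀ p ∈ D, ∀ q ∈ D, ‖s p - s q‖ ≤ L * ‖p - q‖ := by
  rcases D.eq_empty_or_nonempty with hD | ⟨d0, hd0⟩
  · exact ⟨0, le_refl 0, fun p hp => by rw [hD] at hp; exact absurd hp (notMem_empty p)⟩
  have h0D : (0 : E) ∈ D := by
    have := (hsmul 0 le_rfl d0 hd0).1; simpa using this
  have hwd : ∀ a ∈ D, ∀ b ∈ D, ∀ a' ∈ D, ∀ b' ∈ D, a - b = a' - b' →
      s a - s b = s a' - s b' := by
    intro a ha b hb a' ha' b' hb' h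
    have h2 : a + b' = a' + b := by
      have : a - b + (b + b') = a' - b' + (b + b') := by rw [h]
      abel_nf at this ⊢
      exact this
    have h3 : s (a + b') = s (a' + b) := by rw [h2]
    rw [(hadd a ha b' hb').2, (hadd a' ha' b hb).2] at h3
    have : s a - s b = (s a + s b') - (s b' + s b) := by abel
    rw [this, h3]; abel
  set W : Submodule ℝ E :=
    { carrier := {w | ∃ a ∈ D, ∃ b ∈ D, w = a - b}
      add_mem' := by
        rintro u v ⟨a, ha, b, hb, rfl⟩ ⟨a', ha', b', hb', rfl⟩
        exact ⟨a + a', (hadd a ha a' ha').1, b + b', (hadd b hb b' hb').1, by abel⟩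
      zero_mem' := ⟨0, h0D, 0, h0D, by simp⟩
      smul_mem' := by
        rintro c u ⟨a, ha, b, hb, rfl⟩
        rcases le_or_gt 0 c with hc | hc
        · exact ⟨c • a, (hsmul c hc a ha).1, c • b, (hsmul c hc b hb).1, by
            rw [smul_sub]⟩
        · refine ⟨(-c) • b, (hsmul (-c) (by linarith) b hb).1,
            (-c) • a, (hsmul (-c) (by linarith) a ha).1, ?_⟩
          rw [smul_sub]
          module } with hW
  have hmemW : ∀ (w : W), ∃ a ∈ D, ∃ b ∈ D, (w : E) = a - b := fun w => w.2
  choose wa hwa wb hwb hww using hmemW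
  set f : W → F := fun w => s (wa w) - s (wb w) with hfdef
  have hfval : ∀ (w : W), ∀ a ∈ D, ∀ b ∈ D, (w : E) = a - b → f w = s a - s b := by
    intro w a ha b hb h
    exact hwd (wa w) (hwa w) (wb w) (hwb w) a ha b hb (by rw [← hww w, h])
  have hf_add : ∀ u v : W, f (u + v) = f u + f v := by
    intro u v
    have h1 : ((u + v : W) : E) = (wa u + wa v) - (wb u + wb v) := by
      push_cast [hww u, hww v]
      abel
    rw [hfval (u+v) _ (hadd _ (hwa u) _ (hwa v)).1 _ (hadd _ (hwb u) _ (hwb v)).1 h1,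
      (hadd _ (hwa u) _ (hwa v)).2, (hadd _ (hwb u) _ (hwb v)).2, hfdef]
    beta_reduce
    abel
  have hf_smul : ∀ (c : ℝ) (u : W), f (c • u) = c • f u := by
    intro c u
    rcases le_or_gt 0 c with hc | hc
    · have h1 : ((c • u : W) : E) = c • wa u - c • wb u := by
        push_cast [hww u]; rw [smul_sub]
      rw [hfval (c • u) _ (hsmul c hc _ (hwa u)).1 _ (hsmul c hc _ (hwb u)).1 h1,
        (hsmul c hc _ (hwa u)).2, (hsmul c hc _ (hwb u)).2, hfdef, smul_sub]
    · have hc' : (0:ℝ) ≤ -c := by linarith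
      have h1 : ((c • u : W) : E) = (-c) • wb u - (-c) • wa u := by
        push_cast [hww u]
        rw [smul_sub, neg_smul, neg_smul]
        abel
      rw [hfval (c • u) _ (hsmul _ hc' _ (hwb u)).1 _ (hsmul _ hc' _ (hwa u)).1 h1,
        (hsmul _ hc' _ (hwb u)).2, (hsmul _ hc' _ (hwa u)).2, hfdef, neg_smul, neg_smul,
        smul_sub]
      abel
  set flin : W →ₗ[ℝ] F := { toFun := f, map_add' := hf_add, map_smul' := hf_smul } with hflin
  set fc : W →L[ℝ] F := LinearMap.toContinuousLinearMap flin with hfc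
  refine ⟨‖fc‖, ContinuousLinearMap.opNorm_nonneg fc, ?_⟩
  intro p hp q hq
  set w : W := ⟨p - q, ⟨p, hp, q, hq, rfl⟩⟩ with hw2
  have h1 : s p - s q = fc w := by
    have := hfval w p hp q hq rfl
    simp only [hfc, hflin]
    rw [LinearMap.coe_toContinuousLinearMap']
    exact this.symm
  rw [h1]
  calc ‖fc w‖ ≤ ‖fc‖ * ‖w‖ := fc.le_opNorm w
    _ = ‖fc‖ * ‖p - q‖ := by rw [Submodule.norm_coe w]

end Aux

/-- For a polyhedral convex cone `K` and a matrix `Lam`, the mapping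
`z ↦ Lam z + N_K(z)` is strongly regular at `0` for `0` iff the linear variational
inequality `Lam z + N_K(z) ∋ r` has exactly one solution for every `r`. -/
theorem strong_regularity_iff_unique_solvability
    {n : ℕ} (K : Set (Fin n → ℝ)) (hKpoly : IsPolyhedral K)
    (hKcone : ∀ (c : ℝ), 0 ≤ c → ∀ x ∈ K, c • x ∈ K)
    (Lam : Matrix (Fin n) (Fin n) ℝ) :
    StronglyRegularAt (fun z => {y | y - Lam *ᵥ z ∈ normalCone K z}) 0 0 ↔
      ∀ r : Fin n → ℝ, ∃! z : Fin n → ℝ, r - Lam *ᵥ z ∈ normalCone K z := by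
  -- scaling property of the normal cone of a cone
  have hNscale : ∀ t : ℝ, 0 < t → ∀ z y : Fin n → ℝ,
      y ∈ normalCone K z → t • y ∈ normalCone K (t • z) := by
    intro t ht z y ⟨hzK, hy⟩
    have h0K' : (0 : Fin n → ℝ) ∈ K := by simpa using hKcone 0 le_rfl z hzK
    have hz2 : (2:ℝ) • z ∈ K := hKcone 2 (by norm_num) z hzK
    have e0 := hy 0 h0K'
    have e2 := hy _ hz2
    have hyz : y ⬝ᵥ z = 0 := by
      have a0 : y ⬝ᵥ ((0 : Fin n → ℝ) - z) = -(y ⬝ᵥ z) := by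
        rw [zero_sub, dotProduct_neg]
      have a2 : y ⬝ᵥ ((2:ℝ) • z - z) = y ⬝ᵥ z := by
        rw [dotProduct_sub, dotProduct_smul, smul_eq_mul]; ring
      rw [a0] at e0; rw [a2] at e2; linarith
    refine ⟨hKcone t ht.le z hzK, fun w hw => ?_⟩
    have hyw : y ⬝ᵥ w ≤ 0 := by
      have := hy w hw
      rw [dotProduct_sub, hyz, sub_zero] at this
      exact this
    rw [smul_dotProduct, dotProduct_sub, dotProduct_smul, hyz, smul_eq_mul, smul_eq_mul,
      mul_zero, sub_zero]
    exact mul_nonpos_of_nonneg_of_nonpos ht.le hyw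
  constructor
  · -- strong regularity → unique solvability
    rintro ⟨h00, U, hU, V, hV, σ, -, hloc⟩ r
    obtain ⟨δU, hδU0, hδU⟩ := Metric.mem_nhds_iff.mp hU
    obtain ⟨δV, hδV0, hδV⟩ := Metric.mem_nhds_iff.mp hV
    have hball : ∀ (x : Fin n → ℝ) (δ : ℝ), 0 < δ → ‖x‖ < δ → x ∈ Metric.ball (0 : Fin n → ℝ) δ := by
      intro x δ hδ hx
      rw [Metric.mem_ball, dist_zero_right]; exact hx
    -- solution for scaled r, scaled back
    have hsol : ∀ t : ℝ, 0 < t → t • r ∈ V →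
        r - Lam *ᵥ (t⁻¹ • σ (t • r)) ∈ normalCone K (t⁻¹ • σ (t • r)) := by
      intro t ht htV
      have hset := hloc (t • r) htV
      have hσmem : σ (t • r) ∈ {x | t • r ∈ {y | y - Lam *ᵥ x ∈ normalCone K x}} ∩ U := by
        rw [hset]; exact rfl
      have hmem : t • r - Lam *ᵥ σ (t • r) ∈ normalCone K (σ (t • r)) := hσmem.1
      have := hNscale t⁻¹ (by positivity) _ _ hmem
      have heq : t⁻¹ • (t • r - Lam *ᵥ σ (t • r)) = r - Lam *ᵥ (t⁻¹ • σ (t • r)) := by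
        rw [smul_sub, smul_smul, inv_mul_cancel₀ (ne_of_gt ht), one_smul, mulVec_smul]
      rw [heq] at this
      exact this
    -- uniqueness
    have huni : ∀ z₁ z₂ : Fin n → ℝ, r - Lam *ᵥ z₁ ∈ normalCone K z₁ →
        r - Lam *ᵥ z₂ ∈ normalCone K z₂ → z₁ = z₂ := by
      intro z₁ z₂ h₁ h₂
      set M := ‖z₁‖ + ‖z₂‖ + ‖r‖ + 1 with hM
      have hM0 : 0 < M := by positivity
      set t := min δU δV / (2 * M) with htdef
      have ht : 0 < t := by positivity
      have htM : t * M < min δU δV := by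
        rw [htdef]; rw [div_mul_eq_mul_div]
        rw [div_lt_iff₀ (by positivity : (0:ℝ) < 2 * M)]
        nlinarith [lt_min hδU0 hδV0]
      have hsmall : ∀ x : Fin n → ℝ, ‖x‖ ≤ M - 1 → t * ‖x‖ < min δU δV := by
        intro x hx
        have : t * ‖x‖ ≤ t * (M - 1) := by nlinarith [norm_nonneg x]
        nlinarith
      have hz₁U : t • z₁ ∈ U := hδU (hball _ _ hδU0 (by
        rw [norm_smul, Real.norm_eq_abs, abs_of_pos ht]
        exact lt_of_lt_of_le (hsmall z₁ (by rw [hM]; linarith [norm_nonneg z₂, norm_nonneg r])) (min_le_left _ _)))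
      have hz₂U : t • z₂ ∈ U := hδU (hball _ _ hδU0 (by
        rw [norm_smul, Real.norm_eq_abs, abs_of_pos ht]
        exact lt_of_lt_of_le (hsmall z₂ (by rw [hM]; linarith [norm_nonneg z₁, norm_nonneg r])) (min_le_left _ _)))
      have hrV : t • r ∈ V := hδV (hball _ _ hδV0 (by
        rw [norm_smul, Real.norm_eq_abs, abs_of_pos ht]
        exact lt_of_lt_of_le (hsmall r (by rw [hM]; linarith [norm_nonneg z₁, norm_nonneg z₂])) (min_le_right _ _)))
      have hscale : ∀ z : Fin n → ℝ, r - Lam *ᵥ z ∈ normalCone K z →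
          t • r - Lam *ᵥ (t • z) ∈ normalCone K (t • z) := by
        intro z hz
        have := hNscale t ht _ _ hz
        rw [smul_sub, ← mulVec_smul] at this
        exact this
      have hset := hloc (t • r) hrV
      have hm₁ : t • z₁ ∈ {x | t • r ∈ {y | y - Lam *ᵥ x ∈ normalCone K x}} ∩ U :=
        ⟨hscale z₁ h₁, hz₁U⟩
      have hm₂ : t • z₂ ∈ {x | t • r ∈ {y | y - Lam *ᵥ x ∈ normalCone K x}} ∩ U :=
        ⟨hscale z₂ h₂, hz₂U⟩
      rw [hset] at hm₁ hm₂
      have : t • z₁ = t • z₂ := by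
        rw [Set.mem_singleton_iff] at hm₁ hm₂; rw [hm₁, hm₂]
      exact smul_right_injective _ (ne_of_gt ht) this
    -- existence
    set t := δV / (2 * (‖r‖ + 1)) with htdef
    have ht : 0 < t := by positivity
    have htV : t • r ∈ V := hδV (hball _ _ hδV0 (by
      rw [norm_smul, Real.norm_eq_abs, abs_of_pos ht, htdef]
      rw [div_mul_eq_mul_div, div_lt_iff₀ (by positivity : (0:ℝ) < 2 * (‖r‖ + 1))]
      nlinarith [norm_nonneg r]))
    exact ⟨t⁻¹ • σ (t • r), hsol t ht htV,
      fun z hz => huni z _ hz (hsol t ht htV)⟩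
  · -- unique solvability → strong regularity
    intro H
    obtain ⟨l, Γ, b, hKeq⟩ := hKpoly
    obtain ⟨z₀, hz₀, -⟩ := H 0
    have hz₀K : z₀ ∈ K := hz₀.1
    have h0K : (0 : Fin n → ℝ) ∈ K := by
      have := hKcone 0 le_rfl z₀ hz₀K; simpa using this
    have hb : ∀ i, 0 ≤ b i := by
      intro i
      have h := h0K
      rw [hKeq] at h
      have := h i
      rwa [mulVec_zero] at this
    have hKhom : K = {x | ∀ i, (Γ *ᵥ x) i ≤ 0} := by
      ext x
      constructor
      · intro hx i
        by_contra hpos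
        push_neg at hpos
        set c := (b i + 1) / (Γ *ᵥ x) i with hc
        have hc0 : 0 ≤ c := div_nonneg (by linarith [hb i]) hpos.le
        have hxK : c • x ∈ K := hKcone c hc0 x hx
        rw [hKeq] at hxK
        have h2 := hxK i
        rw [mulVec_smul] at h2
        have h3 : (c • (Γ *ᵥ x)) i = c * (Γ *ᵥ x) i := rfl
        rw [h3, hc, div_mul_cancel₀ _ (ne_of_gt hpos)] at h2
        linarith
      · intro hx
        rw [hKeq]
        intro i
        exact le_trans (hx i) (hb i)
    -- the solution map
    set s : (Fin n → ℝ) → (Fin n → ℝ) := fun r => (H r).choose with hsdef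
    have hs : ∀ r, r - Lam *ᵥ s r ∈ normalCone K (s r) := fun r => (H r).choose_spec.1
    have huniq : ∀ r z, r - Lam *ᵥ z ∈ normalCone K z → z = s r :=
      fun r z h => (H r).choose_spec.2 z h
    -- pieces of the graph
    set DS : Finset (Fin l) → Set (Fin n → ℝ) := fun S =>
      {y | ∀ d : Fin n → ℝ, (∀ i ∈ S, (Γ *ᵥ d) i ≤ 0) → y ⬝ᵥ d ≤ 0} with hDSdef
    set CS : Finset (Fin l) → Set ((Fin n → ℝ) × (Fin n → ℝ)) := fun S =>
      {p | (∀ i, (Γ *ᵥ p.2) i ≤ 0) ∧ (∀ i ∈ S, (Γ *ᵥ p.2) i = 0) ∧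
        p.1 - Lam *ᵥ p.2 ∈ DS S} with hCSdef
    -- (K1) pieces lie in the graph of s
    have hCgraph : ∀ S : Finset (Fin l), ∀ p ∈ CS S, p.2 = s p.1 := by
      rintro S ⟨r, z⟩ ⟨h1, h2, h3⟩
      apply huniq
      refine ⟨by rw [hKhom]; exact h1, ?_⟩
      intro w hw
      apply h3
      intro i hi
      rw [mulVec_sub]
      have hwK : (Γ *ᵥ w) i ≤ 0 := by
        rw [hKhom] at hw; exact hw i
      have := h2 i hi
      simp only [Pi.sub_apply]
      rw [this]
      linarith
    -- (K2) every point of the graph lies in the piece for its active set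
    have hcover : ∀ r : Fin n → ℝ,
        (r, s r) ∈ CS (Finset.univ.filter (fun i => (Γ *ᵥ s r) i = 0)) := by
      intro r
      set z := s r with hz
      have hzK : z ∈ K := (hs r).1
      have hzle : ∀ i, (Γ *ᵥ z) i ≤ 0 := by rw [hKhom] at hzK; exact hzK
      refine ⟨hzle, ?_, ?_⟩
      · intro i hi
        exact (Finset.mem_filter.mp hi).2
      · intro d hd
        -- find ε > 0 with z + ε • d ∈ K
        have hεf : ∀ i : Fin l, ∃ ε : ℝ, 0 < ε ∧
            ∀ u : ℝ, 0 < u → u ≤ ε → (Γ *ᵥ z) i + u * (Γ *ᵥ d) i ≤ 0 := by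
          intro i
          rcases le_or_gt ((Γ *ᵥ d) i) 0 with hdi | hdi
          · exact ⟨1, one_pos, fun u hu hue =>
              add_nonpos (hzle i) (mul_nonpos_iff.mpr (Or.inl ⟨hu.le, hdi⟩))⟩
          · have hiz : (Γ *ᵥ z) i < 0 := by
              rcases lt_or_eq_of_le (hzle i) with h | h
              · exact h
              · exfalso
                have : i ∈ Finset.univ.filter (fun i => (Γ *ᵥ z) i = 0) :=
                  Finset.mem_filter.mpr ⟨Finset.mem_univ i, h⟩
                exact absurd (hd i this) (not_le.mpr hdi)
            refine ⟨-(Γ *ᵥ z) i / (Γ *ᵥ d) i, div_pos (by linarith) hdi, fun u hu hue => ?_⟩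
            have : u * (Γ *ᵥ d) i ≤ (-(Γ *ᵥ z) i / (Γ *ᵥ d) i) * (Γ *ᵥ d) i :=
              mul_le_mul_of_nonneg_right hue hdi.le
            rw [div_mul_cancel₀ _ (ne_of_gt hdi)] at this
            linarith
        choose εf hεf1 hεf2 using hεf
        set Efin := insert (1:ℝ) (Finset.univ.image εf) with hEfin
        have hEne : Efin.Nonempty := ⟨1, Finset.mem_insert_self _ _⟩
        set ε := Efin.min' hEne with hε
        have hε0 : 0 < ε := by
          apply (Finset.lt_min'_iff _ _).mpr
          intro y hy
          rw [hEfin] at hy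
          rcases Finset.mem_insert.mp hy with h | h
          · rw [h]; exact one_pos
          · obtain ⟨i, -, rfl⟩ := Finset.mem_image.mp h
            exact hεf1 i
        have hεle : ∀ i, ε ≤ εf i := fun i =>
          Finset.min'_le _ _ (Finset.mem_insert_of_mem
            (Finset.mem_image.mpr ⟨i, Finset.mem_univ i, rfl⟩))
        have hwK : z + ε • d ∈ K := by
          rw [hKhom]
          intro i
          rw [mulVec_add, mulVec_smul]
          have : (Γ *ᵥ z + ε • (Γ *ᵥ d)) i = (Γ *ᵥ z) i + ε * (Γ *ᵥ d) i := rfl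
          rw [this]
          exact hεf2 i ε hε0 (hεle i)
        have hdot := (hs r).2 (z + ε • d) hwK
        rw [add_sub_cancel_left, dotProduct_smul, smul_eq_mul] at hdot
        nlinarith
    -- (K3) each piece is closed
    have cdot : ∀ d : Fin n → ℝ, Continuous (fun y : Fin n → ℝ => y ⬝ᵥ d) := by
      intro d
      unfold dotProduct
      exact continuous_finset_sum _ (fun j _ => (continuous_apply j).mul continuous_const)
    have cmulVec : ∀ {m : ℕ} (A : Matrix (Fin m) (Fin n) ℝ),
        Continuous (fun x : Fin n → ℝ => A *ᵥ x) := by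
      intro m A
      have : (fun x : Fin n → ℝ => A *ᵥ x) = ⇑(Matrix.mulVecLin A) := by
        ext x i; rw [Matrix.mulVecLin_apply]
      rw [this]
      exact LinearMap.continuous_of_finiteDimensional _
    have hCclosed : ∀ S : Finset (Fin l), IsClosed (CS S) := by
      intro S
      have e1 : IsClosed {p : (Fin n → ℝ) × (Fin n → ℝ) | ∀ i, (Γ *ᵥ p.2) i ≤ 0} := by
        rw [Set.setOf_forall]
        exact isClosed_iInter fun i => isClosed_le
          (((continuous_apply i).comp ((cmulVec Γ).comp continuous_snd))) continuous_const
      have e2 : IsClosed {p : (Fin n → ℝ) × (Fin n → ℝ) | ∀ i ∈ S, (Γ *ᵥ p.2) i = 0} := by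
        rw [Set.setOf_forall]
        refine isClosed_iInter fun i => ?_
        rw [Set.setOf_forall]
        exact isClosed_iInter fun _ => isClosed_eq
          (((continuous_apply i).comp ((cmulVec Γ).comp continuous_snd))) continuous_const
      have e3 : IsClosed {p : (Fin n → ℝ) × (Fin n → ℝ) | p.1 - Lam *ᵥ p.2 ∈ DS S} := by
        have : {p : (Fin n → ℝ) × (Fin n → ℝ) | p.1 - Lam *ᵥ p.2 ∈ DS S} =
            ⋂ d ∈ {d : Fin n → ℝ | ∀ i ∈ S, (Γ *ᵥ d) i ≤ 0},
              {p : (Fin n → ℝ) × (Fin n → ℝ) | (p.1 - Lam *ᵥ p.2) ⬝ᵥ d ≤ 0} := by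
          ext p
          simp only [Set.mem_setOf_eq, Set.mem_iInter, hDSdef]
        rw [this]
        refine isClosed_biInter fun d _ => ?_
        exact isClosed_le ((cdot d).comp (continuous_fst.sub ((cmulVec Lam).comp continuous_snd)))
          continuous_const
      have : CS S = {p : (Fin n → ℝ) × (Fin n → ℝ) | ∀ i, (Γ *ᵥ p.2) i ≤ 0} ∩
          ({p | ∀ i ∈ S, (Γ *ᵥ p.2) i = 0} ∩ {p | p.1 - Lam *ᵥ p.2 ∈ DS S}) := by
        ext p; simp only [hCSdef, Set.mem_setOf_eq, Set.mem_inter_iff]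
      rw [this]
      exact e1.inter (e2.inter e3)
    -- (K4) closure under addition and nonnegative scaling
    have hCadd : ∀ S : Finset (Fin l), ∀ p ∈ CS S, ∀ q ∈ CS S, p + q ∈ CS S := by
      rintro S p ⟨h1, h2, h3⟩ q ⟨g1, g2, g3⟩
      refine ⟨?_, ?_, ?_⟩
      · intro i
        have : (Γ *ᵥ (p + q).2) i = (Γ *ᵥ p.2) i + (Γ *ᵥ q.2) i := by
          rw [show (p + q).2 = p.2 + q.2 from rfl, mulVec_add]; rfl
        rw [this]; exact add_nonpos (h1 i) (g1 i)
      · intro i hi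
        have : (Γ *ᵥ (p + q).2) i = (Γ *ᵥ p.2) i + (Γ *ᵥ q.2) i := by
          rw [show (p + q).2 = p.2 + q.2 from rfl, mulVec_add]; rfl
        rw [this, h2 i hi, g2 i hi]; ring
      · intro d hd
        have heq : (p + q).1 - Lam *ᵥ (p + q).2 =
            (p.1 - Lam *ᵥ p.2) + (q.1 - Lam *ᵥ q.2) := by
          rw [show (p + q).2 = p.2 + q.2 from rfl, show (p + q).1 = p.1 + q.1 from rfl,
            mulVec_add]
          abel
        rw [heq, add_dotProduct]
        exact add_nonpos (h3 d hd) (g3 d hd)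
    have hCsmul : ∀ S : Finset (Fin l), ∀ c : ℝ, 0 ≤ c → ∀ p ∈ CS S, c • p ∈ CS S := by
      rintro S c hc p ⟨h1, h2, h3⟩
      refine ⟨?_, ?_, ?_⟩
      · intro i
        have : (Γ *ᵥ (c • p).2) i = c * (Γ *ᵥ p.2) i := by
          rw [show (c • p).2 = c • p.2 from rfl, mulVec_smul]; rfl
        rw [this]; exact mul_nonpos_iff.mpr (Or.inl ⟨hc, h1 i⟩)
      · intro i hi
        have : (Γ *ᵥ (c • p).2) i = c * (Γ *ᵥ p.2) i := by
          rw [show (c • p).2 = c • p.2 from rfl, mulVec_smul]; rfl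
        rw [this, h2 i hi]; ring
      · intro d hd
        have heq : (c • p).1 - Lam *ᵥ (c • p).2 = c • (p.1 - Lam *ᵥ p.2) := by
          rw [show (c • p).2 = c • p.2 from rfl, show (c • p).1 = c • p.1 from rfl,
            mulVec_smul, smul_sub]
        rw [heq, smul_dotProduct, smul_eq_mul]
        exact mul_nonpos_iff.mpr (Or.inl ⟨hc, h3 d hd⟩)
    -- domains of the pieces
    set D' : Finset (Fin l) → Set (Fin n → ℝ) := fun S => {r | (r, s r) ∈ CS S} with hD'def
    have hD'add : ∀ S : Finset (Fin l), ∀ x ∈ D' S, ∀ y ∈ D' S,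
        x + y ∈ D' S ∧ s (x + y) = s x + s y := by
      intro S x hx y hy
      have hmem : (x + y, s x + s y) ∈ CS S := hCadd S _ hx _ hy
      have heq : s x + s y = s (x + y) := hCgraph S _ hmem
      refine ⟨?_, heq.symm⟩
      show (x + y, s (x + y)) ∈ CS S
      rw [← heq]; exact hmem
    have hD'smul : ∀ S : Finset (Fin l), ∀ c : ℝ, 0 ≤ c → ∀ x ∈ D' S,
        c • x ∈ D' S ∧ s (c • x) = c • s x := by
      intro S c hc x hx
      have hmem : (c • x, c • s x) ∈ CS S := hCsmul S c hc _ hx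
      have heq : c • s x = s (c • x) := hCgraph S _ hmem
      refine ⟨?_, heq.symm⟩
      show (c • x, s (c • x)) ∈ CS S
      rw [← heq]; exact hmem
    -- per-piece Lipschitz constants
    have hpiece : ∀ S : Finset (Fin l), ∃ L : ℝ, 0 ≤ L ∧
        ∀ p ∈ D' S, ∀ q ∈ D' S, ‖s p - s q‖ ≤ L * ‖p - q‖ :=
      fun S => cone_piece_lip' s (D' S) (hD'add S) (fun c hc x hx => hD'smul S c hc x hx)
    choose Lf hLf0 hLf using hpiece
    set L : ℝ := Finset.univ.sup' ⟨∅, Finset.mem_univ ∅⟩ Lf with hL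
    have hL0 : 0 ≤ L := le_trans (hLf0 ∅) (Finset.le_sup' Lf (Finset.mem_univ ∅))
    have hlip' : ∀ S : Finset (Fin l), ∀ p ∈ D' S, ∀ q ∈ D' S,
        ‖s p - s q‖ ≤ L * ‖p - q‖ := by
      intro S p hp q hq
      refine le_trans (hLf S p hp q hq) ?_
      exact mul_le_mul_of_nonneg_right (Finset.le_sup' Lf (Finset.mem_univ S)) (norm_nonneg _)
    -- closedness of D' along lines
    have hclT : ∀ (S : Finset (Fin l)) (x v : Fin n → ℝ),
        IsClosed {t : ℝ | x + t • v ∈ D' S} := by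
      intro S x v
      apply IsSeqClosed.isClosed
      intro u t hu hlim
      set γ : ℝ → (Fin n → ℝ) := fun a => x + a • v with hγ
      have hγc : Continuous γ := continuous_const.add (continuous_id.smul continuous_const)
      set g : ℕ → (Fin n → ℝ) := fun k => s (γ (u k)) with hg
      have hgu : ∀ k, γ (u k) ∈ D' S := hu
      have hCauchy : CauchySeq g := by
        rw [Metric.cauchySeq_iff]
        intro ε hε
        have hucauchy := hlim.cauchySeq
        rw [Metric.cauchySeq_iff] at hucauchy
        obtain ⟨N, hN⟩ := hucauchy (ε / (L * ‖v‖ + 1)) (by positivity)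
        refine ⟨N, fun k hk m hm => ?_⟩
        have h1 : ‖g k - g m‖ ≤ L * ‖γ (u k) - γ (u m)‖ :=
          hlip' S _ (hgu k) _ (hgu m)
        have h2 : ‖γ (u k) - γ (u m)‖ = |u k - u m| * ‖v‖ := by
          rw [hγ]
          rw [show (x + u k • v) - (x + u m • v) = (u k - u m) • v by module]
          rw [norm_smul, Real.norm_eq_abs]
        have h3 : |u k - u m| < ε / (L * ‖v‖ + 1) := by
          have := hN k hk m hm
          rwa [Real.dist_eq] at this
        rw [dist_eq_norm]
        calc ‖g k - g m‖ ≤ L * (|u k - u m| * ‖v‖) := by rw [← h2]; exact h1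
          _ ≤ (L * ‖v‖) * (ε / (L * ‖v‖ + 1)) := by
              rw [show L * (|u k - u m| * ‖v‖) = (L * ‖v‖) * |u k - u m| by ring]
              exact mul_le_mul_of_nonneg_left h3.le (by positivity)
          _ < ε := by
              rw [mul_div_assoc']
              rw [div_lt_iff₀ (by positivity : (0:ℝ) < L * ‖v‖ + 1)]
              nlinarith [mul_nonneg hL0 (norm_nonneg v), hε]
      obtain ⟨w, hw⟩ := cauchySeq_tendsto_of_complete hCauchy
      have hmem : (γ t, w) ∈ CS S := by
        apply (hCclosed S).isSeqClosed (x := fun k => (γ (u k), g k))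
        · intro k; exact hgu k
        · exact Tendsto.prodMk_nhds ((hγc.tendsto t).comp hlim) hw
      have hweq : w = s (γ t) := hCgraph S _ hmem
      show γ t ∈ D' S
      show (γ t, s (γ t)) ∈ CS S
      rw [← hweq]; exact hmem
    -- global Lipschitz bound
    have hLip : ∀ x y : Fin n → ℝ, ‖s x - s y‖ ≤ L * ‖x - y‖ := by
      apply global_lip' s D'
      · intro r
        exact ⟨Finset.univ.filter (fun i => (Γ *ᵥ s r) i = 0), hcover r⟩
      · exact hclT
      · exact hL0
      · exact hlip'
    -- assemble strong regularity
    refine ⟨?_, Set.univ, Filter.univ_mem, Set.univ, Filter.univ_mem, s,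
      ⟨L.toNNReal, ?_⟩, ?_⟩
    · show (0 : Fin n → ℝ) - Lam *ᵥ 0 ∈ normalCone K 0
      rw [mulVec_zero, sub_zero]
      exact ⟨h0K, fun w hw => by rw [zero_dotProduct]⟩
    · apply LipschitzWith.lipschitzOnWith
      apply LipschitzWith.of_dist_le_mul
      intro x y
      rw [dist_eq_norm, dist_eq_norm, Real.coe_toNNReal L hL0]
      exact hLip x y
    · intro y _
      ext x
      simp only [Set.mem_inter_iff, Set.mem_setOf_eq, Set.mem_univ, and_true,
        Set.mem_singleton_iff]
      constructor
      · exact fun h => huniq y x h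
      · rintro rfl
        exact hs y
end
end

section
/- Let E ⊆ ℝⁿ be a nonempty closed convex set, let F : ℝⁿ → ℝⁿ be continuously differentiable with ∇F Lipschitz continuous on a neighborhood of z̄, and suppose z̄ satisfies F(z̄) + N_E(z̄) ∋ 0. Assume the linearized mapping z ↦ F(z̄) + ∇F(z̄)(z − z̄) + N_E(z) is strongly regular at z̄ for 0. Then there exist a neighborhood O of z̄ and a constant c > 0 such that for every starting point z₀ ∈ O the Josephy–Newton iteration is well defined: for each k there is a unique z_{k+1} ∈ O satisfying F(z_k) + ∇F(z_k)(z_{k+1} − z_k) + N_E(z_{k+1}) ∋ 0, all iterates remain in O, and the sequence converges quadratically to z̄, i.e., ‖z_{k+1} − z̄‖ ≤ c‖z_k − z̄‖² for all k. -/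
open Matrix Filter Topology

noncomputable section

set_option maxHeartbeats 1600000 in
/-- Local quadratic convergence of the Josephy–Newton method for the variational
inequality `F(z) + N_E(z) ∋ 0`, under strong regularity of the linearization at the
solution `zbar`. -/
theorem josephy_newton_quadratic_convergence
    {n : ℕ} (E : Set (Fin n → ℝ)) (hEne : E.Nonempty) (hEclosed : IsClosed E)
    (hEconv : Convex ℝ E)
    (F : (Fin n → ℝ) → (Fin n → ℝ)) (hF : ContDiff ℝ 1 F)
    (zbar : Fin n → ℝ)
    (hLip : ∃ U ∈ 𝓝 zbar, ∃ L : NNReal, LipschitzOnWith L (fderiv ℝ F) U)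
    (hsol : -F zbar ∈ normalCone E zbar)
    (hreg : StronglyRegularAt
      (fun z => {y | y - (F zbar + fderiv ℝ F zbar (z - zbar)) ∈ normalCone E z})
      zbar 0) :
    ∃ O ∈ 𝓝 zbar, ∃ c > (0 : ℝ), ∀ z₀ ∈ O, ∃ Z : ℕ → (Fin n → ℝ),
      Z 0 = z₀ ∧
      (∀ m : ℕ,
        -- the next iterate lies in O and solves the partially linearized inclusion
        Z (m + 1) ∈ O ∧
        (-(F (Z m) + fderiv ℝ F (Z m) (Z (m + 1) - Z m)) ∈ normalCone E (Z (m + 1))) ∧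
        -- and it is the unique such point in O
        (∀ w ∈ O, -(F (Z m) + fderiv ℝ F (Z m) (w - Z m)) ∈ normalCone E w →
          w = Z (m + 1)) ∧
        -- quadratic convergence estimate
        ‖Z (m + 1) - zbar‖ ≤ c * ‖Z m - zbar‖ ^ 2) ∧
      Tendsto Z atTop (𝓝 zbar) := by
  classical
  obtain ⟨hΦ0, U, hU, V, hV, s, ⟨L, hLs⟩, hSV⟩ := hreg
  obtain ⟨U₂, hU₂, K, hK⟩ := hLip
  have hdF : Differentiable ℝ F := hF.differentiable one_ne_zero
  set A : (Fin n → ℝ) →L[ℝ] (Fin n → ℝ) := fderiv ℝ F zbar with hA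
  have h0V : (0 : Fin n → ℝ) ∈ V := mem_of_mem_nhds hV
  have hzU : zbar ∈ U := mem_of_mem_nhds hU
  have hs0 : s 0 = zbar := by
    have h := hSV 0 h0V
    have hz : zbar ∈ {x | (0 : Fin n → ℝ) ∈
        {y | y - (F zbar + fderiv ℝ F zbar (x - zbar)) ∈ normalCone E x}} ∩ U :=
      ⟨hΦ0, hzU⟩
    rw [h, Set.mem_singleton_iff] at hz
    exact hz.symm
  obtain ⟨ρ₁, hρ₁, hρ₁U⟩ := Metric.nhds_basis_closedBall.mem_iff.mp hU
  obtain ⟨ρ₂, hρ₂, hρ₂U⟩ := Metric.nhds_basis_closedBall.mem_iff.mp hU₂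
  obtain ⟨δ, hδ, hδV⟩ := Metric.nhds_basis_closedBall.mem_iff.mp hV
  have hK0 : (0 : ℝ) ≤ (K : ℝ) := K.coe_nonneg
  have hL0 : (0 : ℝ) ≤ (L : ℝ) := L.coe_nonneg
  set ε : ℝ :=
    min (min ρ₁ (ρ₂ / 2)) (min 1 (min (δ / (2 * K + 1)) (1 / (4 * (L * K + 1))))) with hεdef
  have hεpos : 0 < ε := by
    refine lt_min (lt_min hρ₁ (by linarith)) (lt_min one_pos (lt_min ?_ ?_)) <;> positivity
  have hερ₁ : ε ≤ ρ₁ := le_trans (min_le_left _ _) (min_le_left _ _)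
  have hερ₂ : 2 * ε ≤ ρ₂ := by
    have h : ε ≤ ρ₂ / 2 := le_trans (min_le_left _ _) (min_le_right _ _)
    linarith
  have hεone : ε ≤ 1 := le_trans (min_le_right _ _) (min_le_left _ _)
  have hεδ' : ε ≤ δ / (2 * K + 1) :=
    le_trans (min_le_right _ _) (le_trans (min_le_right _ _) (min_le_left _ _))
  have hεLK' : ε ≤ 1 / (4 * (L * K + 1)) :=
    le_trans (min_le_right _ _) (le_trans (min_le_right _ _) (min_le_right _ _))
  have hεδ : 2 * K * ε ^ 2 ≤ δ := by
    have h1 : ε * (2 * K + 1) ≤ δ := by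
      rw [← le_div_iff₀ (by positivity)]; exact hεδ'
    nlinarith
  have hεLK : (L : ℝ) * K * ε ≤ 1 / 4 := by
    have h1 : ε * (4 * (L * K + 1)) ≤ 1 := by
      rw [← le_div_iff₀ (by positivity)]; exact hεLK'
    nlinarith
  clear hεδ' hεLK' hεdef
  clear_value ε
  -- the neighborhood O
  set O : Set (Fin n → ℝ) := Metric.ball zbar ε with hO
  have hOnhds : O ∈ 𝓝 zbar := Metric.ball_mem_nhds zbar hεpos
  set B : Set (Fin n → ℝ) := Metric.closedBall zbar ε with hB
  have hOB : O ⊆ B := Metric.ball_subset_closedBall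
  have hBU : B ⊆ U := fun x hx => hρ₁U (Metric.closedBall_subset_closedBall hερ₁ hx)
  have hBU₂ : B ⊆ U₂ := fun x hx =>
    hρ₂U (Metric.closedBall_subset_closedBall (by linarith) hx)
  have hznorm : ∀ z ∈ B, ‖z - zbar‖ ≤ ε := by
    intro z hz
    simpa [hB, Metric.mem_closedBall, dist_eq_norm] using hz
  -- the residual map
  set r : (Fin n → ℝ) → (Fin n → ℝ) → (Fin n → ℝ) := fun z w =>
    (F zbar + A (w - zbar)) - (F z + fderiv ℝ F z (w - z)) with hr
  -- solving the Newton subproblem is membership of `r z w` in the linearized map at `w`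
  have hsolve : ∀ z w : Fin n → ℝ,
      (-(F z + fderiv ℝ F z (w - z)) ∈ normalCone E w ↔
        r z w - (F zbar + fderiv ℝ F zbar (w - zbar)) ∈ normalCone E w) := by
    intro z w
    have : r z w - (F zbar + fderiv ℝ F zbar (w - zbar)) = -(F z + fderiv ℝ F z (w - z)) := by
      simp only [hr, ← hA]
      abel
    rw [this]
  -- Taylor-type estimate
  have hTaylor : ∀ z ∈ B, ‖F zbar - F z - fderiv ℝ F z (zbar - z)‖ ≤ K * ‖z - zbar‖ ^ 2 := by
    intro z hz
    set t : ℝ := ‖z - zbar‖ with ht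
    have ht0 : 0 ≤ t := norm_nonneg _
    have hsub : Metric.closedBall z t ⊆ U₂ := by
      intro x hx
      apply hρ₂U
      have h1 : dist x z ≤ t := hx
      have h2 : dist z zbar ≤ ε := hz
      have h3 : t ≤ ε := hznorm z hz
      have : dist x zbar ≤ dist x z + dist z zbar := dist_triangle _ _ _
      exact Metric.mem_closedBall.mpr (by linarith)
    have hzs : z ∈ Metric.closedBall z t := Metric.mem_closedBall_self ht0
    have hzbars : zbar ∈ Metric.closedBall z t := by
      simp [Metric.mem_closedBall, dist_eq_norm, ht, norm_sub_rev zbar z]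
    have hbound : ∀ x ∈ Metric.closedBall z t, ‖fderiv ℝ F x - fderiv ℝ F z‖ ≤ K * t := by
      intro x hx
      have h1 : dist (fderiv ℝ F x) (fderiv ℝ F z) ≤ K * dist x z :=
        hK.dist_le_mul x (hsub hx) z (hsub hzs)
      rw [dist_eq_norm] at h1
      exact h1.trans (by
        have : dist x z ≤ t := hx
        nlinarith)
    have := (convex_closedBall z t).norm_image_sub_le_of_norm_fderiv_le'
      (fun x _ => hdF x) hbound hzs hzbars
    calc ‖F zbar - F z - fderiv ℝ F z (zbar - z)‖ ≤ K * t * ‖zbar - z‖ := this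
      _ = K * ‖z - zbar‖ ^ 2 := by rw [norm_sub_rev zbar z]; ring
  have hAD : ∀ z ∈ B, ‖A - fderiv ℝ F z‖ ≤ K * ‖z - zbar‖ := by
    intro z hz
    have h1 : dist A (fderiv ℝ F z) ≤ K * dist zbar z :=
      hK.dist_le_mul zbar (hBU₂ (Metric.mem_closedBall_self hεpos.le)) z (hBU₂ hz)
    rw [dist_eq_norm] at h1
    refine h1.trans ?_
    rw [dist_eq_norm, norm_sub_rev]
  -- key decomposition of r
  have hrdecomp : ∀ z w : Fin n → ℝ,
      r z w = (F zbar - F z - fderiv ℝ F z (zbar - z)) + (A - fderiv ℝ F z) (w - zbar) := by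
    intro z w
    have h1 : fderiv ℝ F z (w - z) =
        fderiv ℝ F z (w - zbar) + fderiv ℝ F z (zbar - z) := by
      rw [← map_add]
      congr 1
      abel
    simp only [hr, ContinuousLinearMap.sub_apply, h1]
    abel
  have hrbound : ∀ z ∈ B, ∀ w : Fin n → ℝ,
      ‖r z w‖ ≤ K * ‖z - zbar‖ ^ 2 + K * ‖z - zbar‖ * ‖w - zbar‖ := by
    intro z hz w
    rw [hrdecomp z w]
    refine (norm_add_le _ _).trans (add_le_add (hTaylor z hz) ?_)
    calc ‖(A - fderiv ℝ F z) (w - zbar)‖ ≤ ‖A - fderiv ℝ F z‖ * ‖w - zbar‖ :=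
          ContinuousLinearMap.le_opNorm _ _
      _ ≤ K * ‖z - zbar‖ * ‖w - zbar‖ :=
          mul_le_mul_of_nonneg_right (hAD z hz) (norm_nonneg _)
  have hrV : ∀ z ∈ B, ∀ w ∈ B, r z w ∈ V := by
    intro z hz w hw
    apply hδV
    rw [Metric.mem_closedBall, dist_zero_right]
    have h1 := hrbound z hz w
    have h2 := hznorm z hz
    have h3 := hznorm w hw
    have h4 : (0:ℝ) ≤ ‖z - zbar‖ := norm_nonneg _
    have h5 : (0:ℝ) ≤ ‖w - zbar‖ := norm_nonneg _
    have e0 : ‖z - zbar‖ ^ 2 ≤ ε ^ 2 := pow_le_pow_left₀ h4 h2 2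
    have e2 : ‖z - zbar‖ * ‖w - zbar‖ ≤ ε * ε := mul_le_mul h2 h3 h5 hεpos.le
    nlinarith
  -- the iteration operator
  set T : (Fin n → ℝ) → (Fin n → ℝ) → (Fin n → ℝ) := fun z w => s (r z w) with hT
  have hTmaps : ∀ z ∈ B, ∀ w ∈ B, ‖T z w - zbar‖ ≤ 2 * L * K * ε ^ 2 := by
    intro z hz w hw
    have h0 : T z w - zbar = s (r z w) - s 0 := by rw [hs0]
    rw [h0]
    have h1 : dist (s (r z w)) (s 0) ≤ L * dist (r z w) 0 :=
      hLs.dist_le_mul _ (hrV z hz w hw) 0 h0V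
    rw [dist_eq_norm, dist_eq_norm, sub_zero] at h1
    refine h1.trans ?_
    have h2 := hrbound z hz w
    have h3 := hznorm z hz
    have h4 := hznorm w hw
    have h5 : (0:ℝ) ≤ ‖z - zbar‖ := norm_nonneg _
    have h6 : (0:ℝ) ≤ ‖w - zbar‖ := norm_nonneg _
    have e0 : ‖z - zbar‖ ^ 2 ≤ ε ^ 2 := pow_le_pow_left₀ h5 h3 2
    have e2 : ‖z - zbar‖ * ‖w - zbar‖ ≤ ε * ε := mul_le_mul h3 h4 h6 hεpos.le
    have e3 : ‖r z w‖ ≤ 2 * K * ε ^ 2 := by nlinarith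
    calc (L:ℝ) * ‖r z w‖ ≤ L * (2 * K * ε ^ 2) := mul_le_mul_of_nonneg_left e3 hL0
      _ = 2 * L * K * ε ^ 2 := by ring
  have hTB : ∀ z ∈ B, Set.MapsTo (T z) B B := by
    intro z hz w hw
    have h1 := hTmaps z hz w hw
    rw [hB, Metric.mem_closedBall, dist_eq_norm]
    have h2 : 2 * ε * ((L:ℝ) * K * ε) ≤ 2 * ε * (1/4) :=
      mul_le_mul_of_nonneg_left hεLK (by positivity)
    refine h1.trans ?_
    nlinarith [h2, hεpos]
  have hTcontr : ∀ z ∈ B, ∀ w₁ ∈ B, ∀ w₂ ∈ B,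
      dist (T z w₁) (T z w₂) ≤ (1/2 : ℝ) * dist w₁ w₂ := by
    intro z hz w₁ hw₁ w₂ hw₂
    have h1 : dist (T z w₁) (T z w₂) ≤ L * dist (r z w₁) (r z w₂) :=
      hLs.dist_le_mul _ (hrV z hz w₁ hw₁) _ (hrV z hz w₂ hw₂)
    have h2 : r z w₁ - r z w₂ = (A - fderiv ℝ F z) (w₁ - w₂) := by
      rw [hrdecomp z w₁, hrdecomp z w₂]
      simp only [map_sub]
      abel
    have h3 : dist (r z w₁) (r z w₂) ≤ K * ‖z - zbar‖ * dist w₁ w₂ := by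
      rw [dist_eq_norm, h2, dist_eq_norm]
      calc ‖(A - fderiv ℝ F z) (w₁ - w₂)‖ ≤ ‖A - fderiv ℝ F z‖ * ‖w₁ - w₂‖ :=
            ContinuousLinearMap.le_opNorm _ _
        _ ≤ K * ‖z - zbar‖ * ‖w₁ - w₂‖ :=
            mul_le_mul_of_nonneg_right (hAD z hz) (norm_nonneg _)
    have h4 := hznorm z hz
    have h5 : (0:ℝ) ≤ dist w₁ w₂ := dist_nonneg
    have h6 : (L:ℝ) * K * ‖z - zbar‖ ≤ 1/4 :=
      le_trans (mul_le_mul_of_nonneg_left h4 (mul_nonneg hL0 hK0)) hεLK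
    calc dist (T z w₁) (T z w₂) ≤ L * (K * ‖z - zbar‖ * dist w₁ w₂) :=
          h1.trans (mul_le_mul_of_nonneg_left h3 hL0)
      _ = ((L:ℝ) * K * ‖z - zbar‖) * dist w₁ w₂ := by ring
      _ ≤ (1/4 : ℝ) * dist w₁ w₂ := mul_le_mul_of_nonneg_right h6 h5
      _ ≤ (1/2 : ℝ) * dist w₁ w₂ := by linarith
  -- existence/uniqueness of the Newton step
  have key : ∀ z ∈ O, ∃ w ∈ O,
      (-(F z + fderiv ℝ F z (w - z)) ∈ normalCone E w) ∧
      (∀ w' ∈ O, -(F z + fderiv ℝ F z (w' - z)) ∈ normalCone E w' → w' = w) ∧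
      ‖w - zbar‖ ≤ (2 * L * K + 1) * ‖z - zbar‖ ^ 2 ∧
      ‖w - zbar‖ ≤ ‖z - zbar‖ / 2 := by
    intro z hzO
    have hz : z ∈ B := hOB hzO
    -- Banach fixed point
    have hBc : IsComplete B := Metric.isClosed_closedBall.isComplete
    have hmaps := hTB z hz
    have hcontr : ContractingWith (1/2 : NNReal) (hmaps.restrict (T z) B B) := by
      constructor
      · rw [← NNReal.coe_lt_coe]
        norm_num
      · apply LipschitzWith.of_dist_le_mul
        rintro ⟨w₁, hw₁⟩ ⟨w₂, hw₂⟩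
        simp only [Subtype.dist_eq, Set.MapsTo.val_restrict_apply]
        have := hTcontr z hz w₁ hw₁ w₂ hw₂
        push_cast
        linarith
    obtain ⟨w, hwB, hwfix, -, -⟩ := hcontr.exists_fixedPoint' hBc hmaps
      (Metric.mem_closedBall_self hεpos.le) (edist_ne_top _ _)
    -- fixed-point property
    have hwfix' : s (r z w) = w := hwfix
    have hwfixT : T z w = w := hwfix
    -- w solves the subproblem
    have hwsol : -(F z + fderiv ℝ F z (w - z)) ∈ normalCone E w := by
      rw [hsolve]
      have h := hSV (r z w) (hrV z hz w hwB)
      have : w ∈ {x | r z w ∈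
          {y | y - (F zbar + fderiv ℝ F zbar (x - zbar)) ∈ normalCone E x}} ∩ U := by
        rw [h, Set.mem_singleton_iff]
        exact hwfix'.symm
      exact this.1
    -- quadratic estimate
    have hwest : ‖w - zbar‖ ≤ 2 * L * K * ‖z - zbar‖ ^ 2 := by
      have h0 : w - zbar = s (r z w) - s 0 := by rw [hs0, hwfix']
      have h1 : dist (s (r z w)) (s 0) ≤ L * dist (r z w) 0 :=
        hLs.dist_le_mul _ (hrV z hz w hwB) 0 h0V
      rw [dist_eq_norm, dist_eq_norm, sub_zero, ← h0] at h1
      have h2 := hrbound z hz w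
      have h3 := hznorm z hz
      have h4 := hznorm w hwB
      have h5 : (0:ℝ) ≤ ‖z - zbar‖ := norm_nonneg _
      have h6 : (0:ℝ) ≤ ‖w - zbar‖ := norm_nonneg _
      have h7 : ‖w - zbar‖ ≤ L * (K * ‖z - zbar‖ ^ 2 + K * ‖z - zbar‖ * ‖w - zbar‖) :=
        h1.trans (mul_le_mul_of_nonneg_left h2 hL0)
      -- (1 - L K t) ‖w - zbar‖ ≤ L K t², with L K t ≤ 1/4
      have h8 : (L:ℝ) * K * ‖z - zbar‖ ≤ 1/4 :=
        le_trans (mul_le_mul_of_nonneg_left h3 (mul_nonneg hL0 hK0)) hεLK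
      have h9 : (L:ℝ) * K * ‖z - zbar‖ * ‖w - zbar‖ ≤ (1/4) * ‖w - zbar‖ :=
        mul_le_mul_of_nonneg_right h8 h6
      have h10 : (0:ℝ) ≤ (L:ℝ) * K * ‖z - zbar‖ ^ 2 := by positivity
      nlinarith
    have hwhalf : ‖w - zbar‖ ≤ ‖z - zbar‖ / 2 := by
      have h3 := hznorm z hz
      have h5 : (0:ℝ) ≤ ‖z - zbar‖ := norm_nonneg _
      have h8 : (L:ℝ) * K * ‖z - zbar‖ ≤ 1/4 :=
        le_trans (mul_le_mul_of_nonneg_left h3 (mul_nonneg hL0 hK0)) hεLK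
      have h9 : ((L:ℝ) * K * ‖z - zbar‖) * ‖z - zbar‖ ≤ (1/4) * ‖z - zbar‖ :=
        mul_le_mul_of_nonneg_right h8 h5
      nlinarith
    have hwO : w ∈ O := by
      rw [hO, Metric.mem_ball, dist_eq_norm]
      have h3 := hznorm z hz
      have h5 : (0:ℝ) ≤ ‖z - zbar‖ := norm_nonneg _
      calc ‖w - zbar‖ ≤ ‖z - zbar‖ / 2 := hwhalf
        _ ≤ ε / 2 := by linarith
        _ < ε := by linarith
    refine ⟨w, hwO, hwsol, ?_, ?_, hwhalf⟩
    · -- uniqueness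
      intro w' hw'O hw'sol
      have hw'B : w' ∈ B := hOB hw'O
      rw [hsolve] at hw'sol
      have h := hSV (r z w') (hrV z hz w' hw'B)
      have hmem : w' ∈ {x | r z w' ∈
          {y | y - (F zbar + fderiv ℝ F zbar (x - zbar)) ∈ normalCone E x}} ∩ U :=
        ⟨hw'sol, hBU hw'B⟩
      rw [h, Set.mem_singleton_iff] at hmem
      have hfix' : T z w' = w' := hmem.symm
      -- both are fixed points of the contraction
      have hd : dist w' w ≤ (1/2 : ℝ) * dist w' w := by
        calc dist w' w = dist (T z w') (T z w) := by rw [hfix', hwfixT]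
          _ ≤ (1/2 : ℝ) * dist w' w := hTcontr z hz w' hw'B w hwB
      have : dist w' w = 0 := by
        have h5 : (0:ℝ) ≤ dist w' w := dist_nonneg
        linarith
      exact dist_eq_zero.mp this
    · -- quadratic constant
      have h5 : (0:ℝ) ≤ ‖z - zbar‖ ^ 2 := sq_nonneg _
      nlinarith [hwest]
  -- set up constant
  refine ⟨O, hOnhds, 2 * L * K + 1, by positivity, ?_⟩
  intro z₀ hz₀
  choose! step hstepO hstepsol hstepuniq hstepquad hstephalf using key
  set Z : ℕ → (Fin n → ℝ) := fun m => step^[m] z₀ with hZ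
  have hZ0 : Z 0 = z₀ := rfl
  have hZsucc : ∀ m, Z (m + 1) = step (Z m) := fun m =>
    Function.iterate_succ_apply' step m z₀
  have hZO : ∀ m, Z m ∈ O := by
    intro m
    induction m with
    | zero => exact hz₀
    | succ k ih => rw [hZsucc]; exact hstepO _ ih
  have hhalf : ∀ m, ‖Z m - zbar‖ ≤ (1/2 : ℝ) ^ m * ‖z₀ - zbar‖ := by
    intro m
    induction m with
    | zero => simp [hZ0]
    | succ k ih =>
      rw [hZsucc]
      calc ‖step (Z k) - zbar‖ ≤ ‖Z k - zbar‖ / 2 := hstephalf _ (hZO k)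
        _ ≤ (1/2 : ℝ) ^ k * ‖z₀ - zbar‖ / 2 := by linarith
        _ = (1/2 : ℝ) ^ (k + 1) * ‖z₀ - zbar‖ := by ring
  refine ⟨Z, hZ0, ?_, ?_⟩
  · intro m
    have hm := hZO m
    refine ⟨by rw [hZsucc]; exact hstepO _ hm, ?_, ?_, ?_⟩
    · rw [hZsucc]; exact hstepsol _ hm
    · intro w hwO hwsol
      rw [hZsucc]
      exact hstepuniq _ hm w hwO hwsol
    · rw [hZsucc]; exact hstepquad _ hm
  · rw [tendsto_iff_norm_sub_tendsto_zero]
    have hlim : Tendsto (fun m : ℕ => (1/2 : ℝ) ^ m * ‖z₀ - zbar‖) atTop (𝓝 0) := by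
      rw [show (0:ℝ) = 0 * ‖z₀ - zbar‖ by ring]
      exact (tendsto_pow_atTop_nhds_zero_of_lt_one (by norm_num) (by norm_num)).mul_const _
    exact squeeze_zero (fun m => norm_nonneg _) hhalf hlim
end
end
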